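/- Let ψ be a semiflow on a metric space X and let τ, τ' be admissible functions on X such that τ' refines τ (i.e., for every x ∈ X and n there is m with τ_n(x) = τ'_m(x)). Then for all T > 0, ε > 0 and 0 < δ < η/2, every finite (ψ, τ', T, ε, δ)-separated set is (ψ, τ, T, ε, δ)-separated; hence s^{τ'}(ψ, T, ε, δ) ≤ s^τ(ψ, T, ε, δ) and h^{τ'}_top(ψ) ≤ h^τ_top(ψ). -/

import Mathlib

open Set Filter Metric ENNReal

/-- A semiflow: `φ 0 = id` and `φ (t+s) = φ t ∘ φ s` for nonnegative times. -/
def IsSemiflow {X : Type*} (φ : ℝ → X → X) : Prop :=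
  (∀ x, φ 0 x = x) ∧ ∀ s t : ℝ, 0 ≤ s → 0 ≤ t → ∀ x, φ (t + s) x = φ t (φ s x)

/-- A continuous semiflow: jointly continuous on `[0,∞) × X`. -/
def IsContSemiflow {X : Type*} [MetricSpace X] (φ : ℝ → X → X) : Prop :=
  IsSemiflow φ ∧ ContinuousOn (fun p : ℝ × X => φ p.1 p.2) (Set.Ici (0:ℝ) ×ˢ Set.univ)

/-- `τ` is an admissible function for the semiflow `ψ`, with respect to `Z`, with constant `η`:
it assigns to each point a strictly increasing sequence of positive times, with `τ₁ ≥ η` on `Z`,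
gaps at least `η`, and compatible with the time translation by the semiflow. -/
def IsAdmissible {X : Type*} (ψ : ℝ → X → X) (τ : X → ℕ → ℝ) (Z : Set X) (η : ℝ) : Prop :=
  0 < η ∧ (∀ x, StrictMono (τ x)) ∧ (∀ x n, 0 < τ x n) ∧
  (∀ x ∈ Z, η ≤ τ x 0) ∧
  (∀ x n s, 0 ≤ s → s < τ x 0 → τ (ψ s x) n = τ x n - s) ∧
  (∀ x n, η ≤ τ x (n + 1) - τ x n)

/-- The set `J^τ_{T,δ}(x) = (0,T] ∖ ⋃_{j : τ_j(x) ≤ T} (τ_j(x)-δ, τ_j(x)+δ)`. -/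
def Jset {X : Type*} (τ : X → ℕ → ℝ) (T δ : ℝ) (x : X) : Set ℝ :=
  Ioc 0 T \ ⋃ j ∈ {j | τ x j ≤ T}, Ioo (τ x j - δ) (τ x j + δ)

/-- The `τ`-dynamical ball `B^τ(x, ψ, T, ε, δ)`. -/
def tBall {X : Type*} [MetricSpace X] (ψ : ℝ → X → X) (τ : X → ℕ → ℝ)
    (x : X) (T ε δ : ℝ) : Set X :=
  {y | ∀ t ∈ Jset τ T δ x, dist (ψ t x) (ψ t y) < ε}

/-- The classical dynamical ball `B(x, ψ, T, ε)`. -/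
def dynBall {X : Type*} [MetricSpace X] (ψ : ℝ → X → X) (x : X) (T ε : ℝ) : Set X :=
  {y | ∀ t ∈ Icc 0 T, dist (ψ t x) (ψ t y) < ε}

/-- `E` is `(ψ, T, ε)`-separated. -/
def IsSep {X : Type*} [MetricSpace X] (ψ : ℝ → X → X) (T ε : ℝ) (E : Set X) : Prop :=
  ∀ x ∈ E, ∀ y ∈ E, y ≠ x → y ∉ dynBall ψ x T ε

/-- `E` is `(ψ, τ, T, ε, δ)`-separated. -/
def IsTSep {X : Type*} [MetricSpace X] (ψ : ℝ → X → X) (τ : X → ℕ → ℝ)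
    (T ε δ : ℝ) (E : Set X) : Prop :=
  ∀ x ∈ E, ∀ y ∈ E, y ≠ x → y ∉ tBall ψ τ x T ε δ

/-- Maximal cardinality of a `(ψ, T, ε)`-separated subset of `Y` (in `ℝ≥0∞`). -/
noncomputable def sepNum {X : Type*} [MetricSpace X] (ψ : ℝ → X → X) (Y : Set X)
    (T ε : ℝ) : ℝ≥0∞ :=
  ⨆ (E : Finset X) (_ : ↑E ⊆ Y ∧ IsSep ψ T ε ↑E), (E.card : ℝ≥0∞)

/-- Supremum of cardinalities of finite `(ψ, τ, T, ε, δ)`-separated subsets of `Y`. -/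
noncomputable def tSepNum {X : Type*} [MetricSpace X] (ψ : ℝ → X → X) (τ : X → ℕ → ℝ)
    (Y : Set X) (T ε δ : ℝ) : ℝ≥0∞ :=
  ⨆ (E : Finset X) (_ : ↑E ⊆ Y ∧ IsTSep ψ τ T ε δ ↑E), (E.card : ℝ≥0∞)

/-- Exponential growth rate `limsup_{T→∞} (1/T) log f(T)`, with `log ∞ = ∞`. -/
noncomputable def growthRate (f : ℝ → ℝ≥0∞) : EReal :=
  limsup (fun T : ℝ => ENNReal.log (f T) / (T : EReal)) atTop

/-- The classical topological entropy of `ψ` on `Y`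
(the limit as `ε → 0⁺` is a supremum over `ε > 0` by monotonicity). -/
noncomputable def htop {X : Type*} [MetricSpace X] (ψ : ℝ → X → X) (Y : Set X) : EReal :=
  ⨆ (ε : ℝ) (_ : 0 < ε), growthRate fun T => sepNum ψ Y T ε

/-- The `τ`-topological entropy of `ψ` on `Y`, for an admissible function with constant `η`
(the limits as `δ → 0⁺` and `ε → 0⁺` are suprema by monotonicity). -/
noncomputable def tHtop {X : Type*} [MetricSpace X] (ψ : ℝ → X → X) (τ : X → ℕ → ℝ)
    (Y : Set X) (η : ℝ) : EReal :=
  ⨆ (δ : ℝ) (_ : 0 < δ) (_ : δ < η / 2) (ε : ℝ) (_ : 0 < ε),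
    growthRate fun T => tSepNum ψ τ Y T ε δ


section Refinement

variable {X : Type*}

def Refines (τ' τ : X → ℕ → ℝ) : Prop :=
  ∀ x n, ∃ m, τ x n = τ' x m

theorem Jset_subset_of_refines {τ τ' : X → ℕ → ℝ} (h : Refines τ' τ) (T δ : ℝ) (x : X) :
    Jset τ' T δ x ⊆ Jset τ T δ x := by
  refine sdiff_subset_sdiff_right (iUnion₂_subset fun j hj => ?_)
  obtain ⟨m, hm⟩ := h x j
  rw [mem_ofPred_eq, hm] at hj
  rw [hm]
  exact subset_biUnion_of_mem (u := fun m => Ioo (τ' x m - δ) (τ' x m + δ)) hj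

section MetricSpace

variable [MetricSpace X] {ψ : ℝ → X → X} {τ τ' : X → ℕ → ℝ}

theorem tBall_subset_of_refines (h : Refines τ' τ) (x : X) (T ε δ : ℝ) :
    tBall ψ τ x T ε δ ⊆ tBall ψ τ' x T ε δ :=
  fun _ hy t ht => hy t (Jset_subset_of_refines h T δ x ht)

theorem IsTSep.of_refines (h : Refines τ' τ) {T ε δ : ℝ} {E : Set X}
    (hE : IsTSep ψ τ' T ε δ E) : IsTSep ψ τ T ε δ E :=
  fun x hx y hy hne hball => hE x hx y hy hne (tBall_subset_of_refines h x T ε δ hball)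

theorem tSepNum_le_of_refines (h : Refines τ' τ) (Y : Set X) (T ε δ : ℝ) :
    tSepNum ψ τ' Y T ε δ ≤ tSepNum ψ τ Y T ε δ :=
  iSup₂_mono' fun E hE => ⟨E, ⟨hE.1, hE.2.of_refines h⟩, le_rfl⟩

end MetricSpace

theorem growthRate_mono {f g : ℝ → ℝ≥0∞} (h : ∀ᶠ T in atTop, f T ≤ g T) :
    growthRate f ≤ growthRate g := by
  refine limsup_le_limsup ?_ isCobounded_le_of_bot isBounded_le_of_top
  filter_upwards [h, eventually_ge_atTop 0] with T hfg hT
  exact EReal.div_le_div_right_of_nonneg (EReal.coe_nonneg.mpr hT) (log_monotone hfg)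

theorem tHtop_mono [MetricSpace X] {ψ : ℝ → X → X} {τ τ' : X → ℕ → ℝ} {Y : Set X} {η : ℝ}
    (h : ∀ T ε δ, tSepNum ψ τ' Y T ε δ ≤ tSepNum ψ τ Y T ε δ) :
    tHtop ψ τ' Y η ≤ tHtop ψ τ Y η :=
  iSup₂_mono fun δ _ => iSup_mono fun _ => iSup₂_mono fun ε _ =>
    growthRate_mono (Eventually.of_forall fun T => h T ε δ)

end Refinement

theorem tHtop_antitone_of_refines_general {X : Type*} [MetricSpace X]
    (ψ : ℝ → X → X) (τ τ' : X → ℕ → ℝ) (η : ℝ)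
    (href : ∀ x : X, ∀ n : ℕ, ∃ m : ℕ, τ x n = τ' x m) :
    (∀ T ε δ : ℝ, 0 < T → 0 < ε → 0 < δ → δ < η / 2 →
      (∀ E : Finset X, IsTSep ψ τ' T ε δ ↑E → IsTSep ψ τ T ε δ (↑E : Set X)) ∧
      tSepNum ψ τ' Set.univ T ε δ ≤ tSepNum ψ τ Set.univ T ε δ) ∧
    tHtop ψ τ' Set.univ η ≤ tHtop ψ τ Set.univ η :=
  ⟨fun T ε δ _ _ _ _ => ⟨fun _ hE => hE.of_refines href, tSepNum_le_of_refines href _ T ε δ⟩,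
    tHtop_mono (tSepNum_le_of_refines href _)⟩

/-- Monotonicity of the `τ`-topological entropy under refinement of admissible functions. -/
theorem tHtop_antitone_of_refines {X : Type*} [MetricSpace X]
    (ψ : ℝ → X → X) (hψ : IsSemiflow ψ) (τ τ' : X → ℕ → ℝ) (Z Z' : Set X) (η : ℝ)
    (hτ : IsAdmissible ψ τ Z η) (hτ' : IsAdmissible ψ τ' Z' η)
    (href : ∀ x : X, ∀ n : ℕ, ∃ m : ℕ, τ x n = τ' x m) :
    (∀ T ε δ : ℝ, 0 < T → 0 < ε → 0 < δ → δ < η / 2 →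
      (∀ E : Finset X, IsTSep ψ τ' T ε δ ↑E → IsTSep ψ τ T ε δ (↑E : Set X)) ∧
      tSepNum ψ τ' Set.univ T ε δ ≤ tSepNum ψ τ Set.univ T ε δ) ∧
    tHtop ψ τ' Set.univ η ≤ tHtop ψ τ Set.univ η :=
  tHtop_antitone_of_refines_general ψ τ τ' η href
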